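/- arXiv:2210.12200 — 5 statements merged into one kernel-verified Lean document; each statement's English description precedes it below -/
import Mathlib

section
/- Under assumptions (A1), (A2), (A3), the map f is continuous and strictly increasing on the interval [τ*_1, τ*_0], and it maps [τ*_1, τ*_0] into itself. -/
/-!
`f` is the composition `t ∘ ρ` of two strictly decreasing maps, so it is strictly increasing.
Since `ψ ∘ t = id` and `ψ` is strictly decreasing, `t` maps `[0, 1]` onto `[τ*_1, τ*_0]`; a
strictly monotone map between intervals is an order isomorphism, hence continuous. So `t` is
continuous and `f = t ∘ ρ` is continuous, and its values lie in `t '' [0, 1] = [τ*_1, τ*_0]`.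
-/

open Set

section Continuity

variable {α β : Type*} [LinearOrder α] [TopologicalSpace α] [OrderTopology α]
  [LinearOrder β] [TopologicalSpace β] [OrderTopology β] {f : α → β} {s : Set α}

theorem StrictMonoOn.continuousOn_of_ordConnected [s.OrdConnected] (hf : StrictMonoOn f s)
    (hfs : (f '' s).OrdConnected) : ContinuousOn f s := by
  let g : s → f '' s := fun x => ⟨f x, mem_image_of_mem f x.2⟩
  have hg : StrictMono g := fun x y hxy => hf x.2 y.2 hxy
  have hg_surj : Function.Surjective g := by
    rintro ⟨_, x, hx, rfl⟩
    exact ⟨⟨x, hx⟩, rfl⟩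
  rw [continuousOn_iff_continuous_domRestrict]
  -- on order-connected subsets the subspace topology is the order topology
  exact continuous_subtype_val.comp (hg.orderIsoOfSurjective g hg_surj).continuous

theorem StrictAntiOn.continuousOn_of_ordConnected [s.OrdConnected] (hf : StrictAntiOn f s)
    (hfs : (f '' s).OrdConnected) : ContinuousOn f s := by
  have hfs_dual : (OrderDual.toDual ∘ f '' s).OrdConnected := by
    rw [image_comp, OrderDual.toDual.image_eq_preimage_symm]
    exact hfs.dual
  exact continuous_ofDual.comp_continuousOn (hf.dual_right.continuousOn_of_ordConnected hfs_dual)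

end Continuity

section RightInverse

variable {α β : Type*} [LinearOrder α] [LinearOrder β] {ψ : α → β} {t : β → α} {S : Set α}

theorem Set.LeftInvOn.strictAntiOn {T : Set β} (hinv : LeftInvOn ψ t T)
    (hψ : StrictAntiOn ψ S) (ht : MapsTo t T S) : StrictAntiOn t T := by
  intro r hr r' hr' hrr'
  exact (hψ.lt_iff_gt (ht hr) (ht hr')).1 (by rwa [hinv hr, hinv hr'])

theorem Set.LeftInvOn.image_Icc_of_strictAntiOn [S.OrdConnected] {a b : β}
    (hinv : LeftInvOn ψ t (Icc a b)) (hψ : StrictAntiOn ψ S) (ht : MapsTo t (Icc a b) S)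
    (hab : a ≤ b) : t '' Icc a b = Icc (t b) (t a) := by
  have ha : a ∈ Icc a b := left_mem_Icc.2 hab
  have hb : b ∈ Icc a b := right_mem_Icc.2 hab
  have ht_anti := (hinv.strictAntiOn hψ ht).antitoneOn
  ext y
  constructor
  · rintro ⟨r, hr, rfl⟩
    exact ⟨ht_anti hr hb hr.2, ht_anti ha hr hr.1⟩
  · intro hy
    have hyS : y ∈ S := OrdConnected.out ‹_› (ht hb) (ht ha) hy
    have hψy : ψ y ∈ Icc a b := by
      constructor
      · simpa only [hinv ha] using hψ.antitoneOn hyS (ht ha) hy.2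
      · simpa only [hinv hb] using hψ.antitoneOn (ht hb) hyS hy.1
    exact ⟨ψ y, hψy, hψ.injOn (ht hψy) hyS (hinv hψy)⟩

end RightInverse

theorem f_continuous_strictMono_mapsTo_general
    (ρ : ℝ → ℝ)
    (hρdiff : ∀ τ > (0 : ℝ), DifferentiableAt ℝ ρ τ)
    (hρlt : ∀ τ > (0 : ℝ), ρ τ < 1)
    (ψ : ℝ → ℝ)
    -- (A1): ψ is continuous and strictly decreasing on (0,∞), range contains [0,1]
    (hψanti : StrictAntiOn ψ (Set.Ioi 0))
    -- τ*_r : unique solution in (0,∞) of ψ(τ) = r, for r ∈ [0,1]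
    (t : ℝ → ℝ)
    (ht_pos : ∀ r ∈ Set.Icc (0 : ℝ) 1, 0 < t r)
    (ht_sol : ∀ r ∈ Set.Icc (0 : ℝ) 1, ψ (t r) = r)
    -- (A3): ρ is positive and strictly decreasing on [τ*_1, τ*_0]
    (hρpos : ∀ s ∈ Set.Icc (t 1) (t 0), 0 < ρ s)
    (hρanti : StrictAntiOn ρ (Set.Icc (t 1) (t 0)))
    -- f(s) = τ*_{ρ(s)}
    (f : ℝ → ℝ) (hf : ∀ s > (0 : ℝ), ρ s ∈ Set.Icc (0 : ℝ) 1 → f s = t (ρ s)) :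
    ContinuousOn f (Set.Icc (t 1) (t 0)) ∧
    StrictMonoOn f (Set.Icc (t 1) (t 0)) ∧
    Set.MapsTo f (Set.Icc (t 1) (t 0)) (Set.Icc (t 1) (t 0)) := by
  have ht_maps : MapsTo t (Icc 0 1) (Ioi 0) := ht_pos
  have ht_inv : LeftInvOn ψ t (Icc 0 1) := ht_sol
  have ht_anti : StrictAntiOn t (Icc 0 1) := ht_inv.strictAntiOn hψanti ht_maps
  have ht_image : t '' Icc 0 1 = Icc (t 1) (t 0) :=
    ht_inv.image_Icc_of_strictAntiOn hψanti ht_maps zero_le_one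
  have hs_pos : ∀ s ∈ Icc (t 1) (t 0), 0 < s :=
    fun s hs => (ht_pos 1 (right_mem_Icc.2 zero_le_one)).trans_le hs.1
  have hρ_maps : MapsTo ρ (Icc (t 1) (t 0)) (Icc 0 1) :=
    fun s hs => ⟨(hρpos s hs).le, (hρlt s (hs_pos s hs)).le⟩
  have hf_eq : EqOn (t ∘ ρ) f (Icc (t 1) (t 0)) :=
    fun s hs => (hf s (hs_pos s hs) (hρ_maps hs)).symm
  have ht_cont : ContinuousOn t (Icc 0 1) :=
    ht_anti.continuousOn_of_ordConnected (ht_image ▸ ordConnected_Icc)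
  have hρ_cont : ContinuousOn ρ (Icc (t 1) (t 0)) :=
    fun s hs => (hρdiff s (hs_pos s hs)).continuousAt.continuousWithinAt
  refine ⟨(ht_cont.comp hρ_cont hρ_maps).congr hf_eq.symm,
    (ht_anti.comp hρanti hρ_maps).congr hf_eq, ?_⟩
  exact ((ht_image ▸ mapsTo_image t (Icc 0 1)).comp hρ_maps).congr hf_eq

/-- Under (A1), (A2), (A3), the map f is continuous and strictly increasing on
[τ*_1, τ*_0], and maps this interval into itself. -/
theorem f_continuous_strictMono_mapsTo
    (c : ℝ) (hc : 0 < c) (ρ : ℝ → ℝ)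
    (hρdiff : ∀ τ > (0 : ℝ), DifferentiableAt ℝ ρ τ)
    (hρlt : ∀ τ > (0 : ℝ), ρ τ < 1)
    (J : ℝ → ℝ) (hJ : ∀ τ, J τ = c * (1 - ρ τ))
    (ψ : ℝ → ℝ) (hψdef : ∀ τ, ψ τ = 2 * τ * deriv J τ / J τ - 1)
    -- (A1): ψ is continuous and strictly decreasing on (0,∞), range contains [0,1]
    (hψcont : ContinuousOn ψ (Set.Ioi 0))
    (hψanti : StrictAntiOn ψ (Set.Ioi 0))
    (hψrange : Set.Icc (0 : ℝ) 1 ⊆ ψ '' Set.Ioi 0)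
    -- τ*_r : unique solution in (0,∞) of ψ(τ) = r, for r ∈ [0,1]
    (t : ℝ → ℝ)
    (ht_pos : ∀ r ∈ Set.Icc (0 : ℝ) 1, 0 < t r)
    (ht_sol : ∀ r ∈ Set.Icc (0 : ℝ) 1, ψ (t r) = r)
    (ht_uniq : ∀ r ∈ Set.Icc (0 : ℝ) 1, ∀ τ > (0 : ℝ), ψ τ = r → τ = t r)
    -- (A2): τ* is the unique positive solution of ψ(τ) = ρ(τ), and 0 < ρ(τ*) < 1
    (τstar : ℝ) (hτstar_pos : 0 < τstar) (hτstar_sol : ψ τstar = ρ τstar)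
    (hτstar_uniq : ∀ τ > (0 : ℝ), ψ τ = ρ τ → τ = τstar)
    (hρτstar : 0 < ρ τstar ∧ ρ τstar < 1)
    -- (A3): ρ is positive and strictly decreasing on [τ*_1, τ*_0]
    (hρpos : ∀ s ∈ Set.Icc (t 1) (t 0), 0 < ρ s)
    (hρanti : StrictAntiOn ρ (Set.Icc (t 1) (t 0)))
    -- f(s) = τ*_{ρ(s)}
    (f : ℝ → ℝ) (hf : ∀ s > (0 : ℝ), ρ s ∈ Set.Icc (0 : ℝ) 1 → f s = t (ρ s)) :
    ContinuousOn f (Set.Icc (t 1) (t 0)) ∧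
    StrictMonoOn f (Set.Icc (t 1) (t 0)) ∧
    Set.MapsTo f (Set.Icc (t 1) (t 0)) (Set.Icc (t 1) (t 0)) :=
  f_continuous_strictMono_mapsTo_general ρ hρdiff hρlt ψ hψanti t ht_pos ht_sol hρpos hρanti f hf
end

section
/- Under assumptions (A1), (A2), (A3), one has τ*_1 < τ* < τ*_0, and more generally for all s, s' ∈ [τ*_1, τ*_0] with s < τ* < s', the ordering s < f(s) < τ* < f(s') < s' holds; in particular τ*_1 < f(τ*_1) < τ* < f(τ*_0) < τ*_0. -/
/-- Under (A1), (A2), (A3): τ*_1 < τ* < τ*_0; for all s, s' ∈ [τ*_1, τ*_0] with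
s < τ* < s', one has s < f(s) < τ* < f(s') < s'; in particular
τ*_1 < f(τ*_1) < τ* < f(τ*_0) < τ*_0. -/
theorem f_ordering_around_tau_star
    (c : ℝ) (hc : 0 < c) (ρ : ℝ → ℝ)
    (hρdiff : ∀ τ > (0 : ℝ), DifferentiableAt ℝ ρ τ)
    (hρlt : ∀ τ > (0 : ℝ), ρ τ < 1)
    (J : ℝ → ℝ) (hJ : ∀ τ, J τ = c * (1 - ρ τ))
    (ψ : ℝ → ℝ) (hψdef : ∀ τ, ψ τ = 2 * τ * deriv J τ / J τ - 1)
    -- (A1): ψ is continuous and strictly decreasing on (0,∞), range contains [0,1]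
    (hψcont : ContinuousOn ψ (Set.Ioi 0))
    (hψanti : StrictAntiOn ψ (Set.Ioi 0))
    (hψrange : Set.Icc (0 : ℝ) 1 ⊆ ψ '' Set.Ioi 0)
    -- τ*_r : unique solution in (0,∞) of ψ(τ) = r, for r ∈ [0,1]
    (t : ℝ → ℝ)
    (ht_pos : ∀ r ∈ Set.Icc (0 : ℝ) 1, 0 < t r)
    (ht_sol : ∀ r ∈ Set.Icc (0 : ℝ) 1, ψ (t r) = r)
    (ht_uniq : ∀ r ∈ Set.Icc (0 : ℝ) 1, ∀ τ > (0 : ℝ), ψ τ = r → τ = t r)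
    -- (A2): τ* is the unique positive solution of ψ(τ) = ρ(τ), and 0 < ρ(τ*) < 1
    (τstar : ℝ) (hτstar_pos : 0 < τstar) (hτstar_sol : ψ τstar = ρ τstar)
    (hτstar_uniq : ∀ τ > (0 : ℝ), ψ τ = ρ τ → τ = τstar)
    (hρτstar : 0 < ρ τstar ∧ ρ τstar < 1)
    -- (A3): ρ is positive and strictly decreasing on [τ*_1, τ*_0]
    (hρpos : ∀ s ∈ Set.Icc (t 1) (t 0), 0 < ρ s)
    (hρanti : StrictAntiOn ρ (Set.Icc (t 1) (t 0)))
    -- f(s) = τ*_{ρ(s)}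
    (f : ℝ → ℝ) (hf : ∀ s > (0 : ℝ), ρ s ∈ Set.Icc (0 : ℝ) 1 → f s = t (ρ s)) :
    (t 1 < τstar ∧ τstar < t 0) ∧
    (∀ s ∈ Set.Icc (t 1) (t 0), ∀ s' ∈ Set.Icc (t 1) (t 0),
      s < τstar → τstar < s' →
      s < f s ∧ f s < τstar ∧ τstar < f s' ∧ f s' < s') ∧
    (t 1 < f (t 1) ∧ f (t 1) < τstar ∧ τstar < f (t 0) ∧ f (t 0) < t 0) := by
  have hmem0 : (0 : ℝ) ∈ Set.Icc (0 : ℝ) 1 := by constructor <;> norm_num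
  have hmem1 : (1 : ℝ) ∈ Set.Icc (0 : ℝ) 1 := by constructor <;> norm_num
  have ht0pos : 0 < t 0 := ht_pos 0 hmem0
  have ht1pos : 0 < t 1 := ht_pos 1 hmem1
  have hψt0 : ψ (t 0) = 0 := ht_sol 0 hmem0
  have hψt1 : ψ (t 1) = 1 := ht_sol 1 hmem1
  have hanti' : ∀ a b : ℝ, 0 < a → 0 < b → ψ b < ψ a → a < b := by
    intro a b ha hb h
    by_contra hle
    push_neg at hle
    rcases eq_or_lt_of_le hle with heq | hlt
    · rw [heq] at h; exact lt_irrefl _ h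
    · exact absurd (hψanti hb ha hlt) (not_lt.mpr h.le)
  have hτ1 : t 1 < τstar := by
    apply hanti' (t 1) τstar ht1pos hτstar_pos
    rw [hψt1, hτstar_sol]; exact hρτstar.2
  have hτ0 : τstar < t 0 := by
    apply hanti' τstar (t 0) hτstar_pos ht0pos
    rw [hψt0, hτstar_sol]; exact hρτstar.1
  have hτmem : τstar ∈ Set.Icc (t 1) (t 0) := ⟨hτ1.le, hτ0.le⟩
  have hρcont : ContinuousOn ρ (Set.Ioi 0) := fun x hx =>
    ((hρdiff x hx).continuousAt).continuousWithinAt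
  have hgcont : ContinuousOn (fun x => ψ x - ρ x) (Set.Ioi 0) := hψcont.sub hρcont
  have hsub : ∀ a b : ℝ, 0 < a → Set.Icc a b ⊆ Set.Ioi 0 := by
    intro a b ha x hx
    exact lt_of_lt_of_le ha hx.1
  have hsign_left : ∀ s ∈ Set.Icc (t 1) (t 0), s < τstar → ρ s < ψ s := by
    intro s hs hsτ
    by_contra hle
    push_neg at hle
    have h0 : (0:ℝ) ∈ Set.Icc (ψ s - ρ s) (ψ (t 1) - ρ (t 1)) := by
      constructor
      · linarith
      · have := hρlt (t 1) ht1pos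
        rw [hψt1]; linarith
    obtain ⟨x, hx, hx0⟩ :=
      intermediate_value_Icc' hs.1 (hgcont.mono (hsub _ _ ht1pos)) h0
    have hxpos : 0 < x := lt_of_lt_of_le ht1pos hx.1
    have hxsol : ψ x = ρ x := by
      have : ψ x - ρ x = 0 := hx0
      linarith
    exact absurd (hτstar_uniq x hxpos hxsol)
      (ne_of_lt (lt_of_le_of_lt hx.2 hsτ))
  have hsign_right : ∀ s ∈ Set.Icc (t 1) (t 0), τstar < s → ψ s < ρ s := by
    intro s hs hsτ
    by_contra hle
    push_neg at hle
    have hspos : 0 < s := lt_of_lt_of_le ht1pos hs.1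
    have h0 : (0:ℝ) ∈ Set.Icc (ψ (t 0) - ρ (t 0)) (ψ s - ρ s) := by
      constructor
      · have := hρpos (t 0) ⟨hτ1.le.trans hτ0.le, le_refl (t 0)⟩
        rw [hψt0]; linarith
      · linarith
    obtain ⟨x, hx, hx0⟩ :=
      intermediate_value_Icc' hs.2 (hgcont.mono (hsub _ _ hspos)) h0
    have hxpos : 0 < x := lt_of_lt_of_le hspos hx.1
    have hxsol : ψ x = ρ x := by
      have : ψ x - ρ x = 0 := hx0
      linarith
    exact absurd (hτstar_uniq x hxpos hxsol)
      (ne_of_gt (lt_of_lt_of_le hsτ hx.1))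
  have hmain : ∀ s ∈ Set.Icc (t 1) (t 0), ∀ s' ∈ Set.Icc (t 1) (t 0),
      s < τstar → τstar < s' →
      s < f s ∧ f s < τstar ∧ τstar < f s' ∧ f s' < s' := by
    intro s hs s' hs' hsτ hτs'
    have hspos : 0 < s := lt_of_lt_of_le ht1pos hs.1
    have hs'pos : 0 < s' := lt_of_lt_of_le ht1pos hs'.1
    have hρs : ρ s ∈ Set.Icc (0:ℝ) 1 := ⟨(hρpos s hs).le, (hρlt s hspos).le⟩
    have hρs' : ρ s' ∈ Set.Icc (0:ℝ) 1 := ⟨(hρpos s' hs').le, (hρlt s' hs'pos).le⟩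
    have hfs : f s = t (ρ s) := hf s hspos hρs
    have hfs' : f s' = t (ρ s') := hf s' hs'pos hρs'
    have hfspos : 0 < f s := hfs ▸ ht_pos _ hρs
    have hfs'pos : 0 < f s' := hfs' ▸ ht_pos _ hρs'
    have hψfs : ψ (f s) = ρ s := hfs ▸ ht_sol _ hρs
    have hψfs' : ψ (f s') = ρ s' := hfs' ▸ ht_sol _ hρs'
    have hρsτ : ρ τstar < ρ s := hρanti hs hτmem hsτ
    have hρs'τ : ρ s' < ρ τstar := hρanti hτmem hs' hτs'
    refine ⟨?_, ?_, ?_, ?_⟩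
    · apply hanti' s (f s) hspos hfspos
      rw [hψfs]
      exact hsign_left s hs hsτ
    · apply hanti' (f s) τstar hfspos hτstar_pos
      rw [hψfs, hτstar_sol]
      exact hρsτ
    · apply hanti' τstar (f s') hτstar_pos hfs'pos
      rw [hψfs', hτstar_sol]
      exact hρs'τ
    · apply hanti' (f s') s' hfs'pos hs'pos
      rw [hψfs']
      exact hsign_right s' hs' hτs'
  have ht10 : t 1 ≤ t 0 := hτ1.le.trans hτ0.le
  refine ⟨⟨hτ1, hτ0⟩, hmain, ?_⟩
  have := hmain (t 1) ⟨le_refl _, ht10⟩ (t 0) ⟨ht10, le_refl _⟩ hτ1 hτ0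
  exact ⟨this.1, this.2.1, this.2.2.1, this.2.2.2⟩
end

section
/- (Proposition 1, fixed point of the adaptive scheme.) Under assumptions (A1), (A2), (A3), the point τ* is the unique fixed point of f on [τ*_1, τ*_0], and for every starting point s_0 ∈ [τ*_1, τ*_0] the iterated sequence defined by s_{k+1} = f(s_k) converges to τ*; moreover the sequence is increasing if s_0 < τ* and decreasing if s_0 > τ*. -/
/-- Proposition 1 (fixed point of the adaptive scheme). Under (A1), (A2), (A3), τ* is the
unique fixed point of f on [τ*_1, τ*_0], and for every start s₀ ∈ [τ*_1, τ*_0] the iterates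
s_{k+1} = f(s_k) converge to τ*; the sequence is increasing if s₀ < τ* and decreasing if
s₀ > τ*. -/
theorem adaptive_scheme_fixed_point
    (c : ℝ) (hc : 0 < c) (ρ : ℝ → ℝ)
    (hρdiff : ∀ τ > (0 : ℝ), DifferentiableAt ℝ ρ τ)
    (hρlt : ∀ τ > (0 : ℝ), ρ τ < 1)
    (J : ℝ → ℝ) (hJ : ∀ τ, J τ = c * (1 - ρ τ))
    (ψ : ℝ → ℝ) (hψdef : ∀ τ, ψ τ = 2 * τ * deriv J τ / J τ - 1)
    -- (A1): ψ is continuous and strictly decreasing on (0,∞), range contains [0,1]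
    (hψcont : ContinuousOn ψ (Set.Ioi 0))
    (hψanti : StrictAntiOn ψ (Set.Ioi 0))
    (hψrange : Set.Icc (0 : ℝ) 1 ⊆ ψ '' Set.Ioi 0)
    -- τ*_r : unique solution in (0,∞) of ψ(τ) = r, for r ∈ [0,1]
    (t : ℝ → ℝ)
    (ht_pos : ∀ r ∈ Set.Icc (0 : ℝ) 1, 0 < t r)
    (ht_sol : ∀ r ∈ Set.Icc (0 : ℝ) 1, ψ (t r) = r)
    (ht_uniq : ∀ r ∈ Set.Icc (0 : ℝ) 1, ∀ τ > (0 : ℝ), ψ τ = r → τ = t r)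
    -- (A2): τ* is the unique positive solution of ψ(τ) = ρ(τ), and 0 < ρ(τ*) < 1
    (τstar : ℝ) (hτstar_pos : 0 < τstar) (hτstar_sol : ψ τstar = ρ τstar)
    (hτstar_uniq : ∀ τ > (0 : ℝ), ψ τ = ρ τ → τ = τstar)
    (hρτstar : 0 < ρ τstar ∧ ρ τstar < 1)
    -- (A3): ρ is positive and strictly decreasing on [τ*_1, τ*_0]
    (hρpos : ∀ s ∈ Set.Icc (t 1) (t 0), 0 < ρ s)
    (hρanti : StrictAntiOn ρ (Set.Icc (t 1) (t 0)))
    -- f(s) = τ*_{ρ(s)}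
    (f : ℝ → ℝ) (hf : ∀ s > (0 : ℝ), ρ s ∈ Set.Icc (0 : ℝ) 1 → f s = t (ρ s)) :
    (∀ s ∈ Set.Icc (t 1) (t 0), (f s = s ↔ s = τstar)) ∧
    ∀ s₀ ∈ Set.Icc (t 1) (t 0),
      Filter.Tendsto (fun k : ℕ => f^[k] s₀) Filter.atTop (nhds τstar) ∧
      (s₀ < τstar → Monotone fun k : ℕ => f^[k] s₀) ∧
      (τstar < s₀ → Antitone fun k : ℕ => f^[k] s₀) := by

  obtain ⟨hρτ0, hρτ1⟩ := hρτstar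
  have h0mem : (0:ℝ) ∈ Set.Icc (0:ℝ) 1 := by norm_num
  have h1mem : (1:ℝ) ∈ Set.Icc (0:ℝ) 1 := by norm_num
  have ht0pos := ht_pos 0 h0mem
  have ht1pos := ht_pos 1 h1mem
  have hψt0 : ψ (t 0) = 0 := ht_sol 0 h0mem
  have hψt1 : ψ (t 1) = 1 := ht_sol 1 h1mem
  have hρτmem : ρ τstar ∈ Set.Icc (0:ℝ) 1 := ⟨hρτ0.le, hρτ1.le⟩
  have hτstar_eq : τstar = t (ρ τstar) := ht_uniq _ hρτmem τstar hτstar_pos hτstar_sol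
  -- strict anti comparison helper
  have hlt : ∀ a b : ℝ, 0 < a → 0 < b → ψ b < ψ a → a < b := by
    intro a b ha hb h
    by_contra hc
    push_neg at hc
    rcases lt_or_eq_of_le hc with h' | h'
    · exact absurd (hψanti (Set.mem_Ioi.2 hb) (Set.mem_Ioi.2 ha) h') (not_lt.2 h.le)
    · rw [h'] at h; exact lt_irrefl _ h
  have ht1τ : t 1 < τstar := by
    apply hlt _ _ ht1pos hτstar_pos
    rw [hψt1, hτstar_sol]; exact hρτ1
  have hτt0 : τstar < t 0 := by
    apply hlt _ _ hτstar_pos ht0pos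
    rw [hψt0, hτstar_sol]; exact hρτ0
  have hτmem : τstar ∈ Set.Icc (t 1) (t 0) := ⟨ht1τ.le, hτt0.le⟩
  have hspos : ∀ s ∈ Set.Icc (t 1) (t 0), 0 < s := fun s hs => lt_of_lt_of_le ht1pos hs.1
  have hρmem : ∀ s ∈ Set.Icc (t 1) (t 0), ρ s ∈ Set.Icc (0:ℝ) 1 :=
    fun s hs => ⟨(hρpos s hs).le, (hρlt s (hspos s hs)).le⟩
  have hfeq : ∀ s ∈ Set.Icc (t 1) (t 0), f s = t (ρ s) :=
    fun s hs => hf s (hspos s hs) (hρmem s hs)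
  have hfpos : ∀ s ∈ Set.Icc (t 1) (t 0), 0 < f s := by
    intro s hs; rw [hfeq s hs]; exact ht_pos _ (hρmem s hs)
  have hψf : ∀ s ∈ Set.Icc (t 1) (t 0), ψ (f s) = ρ s := by
    intro s hs; rw [hfeq s hs]; exact ht_sol _ (hρmem s hs)
  have hfmem : ∀ s ∈ Set.Icc (t 1) (t 0), f s ∈ Set.Icc (t 1) (t 0) := by
    intro s hs
    constructor
    · by_contra h
      push_neg at h
      have h2 := hψanti (Set.mem_Ioi.2 (hfpos s hs)) (Set.mem_Ioi.2 ht1pos) h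
      rw [hψt1, hψf s hs] at h2
      exact absurd h2 (not_lt.2 (hρmem s hs).2)
    · by_contra h
      push_neg at h
      have h2 := hψanti (Set.mem_Ioi.2 ht0pos) (Set.mem_Ioi.2 (hfpos s hs)) h
      rw [hψt0, hψf s hs] at h2
      exact absurd h2 (not_lt.2 (hρmem s hs).1)
  have hρcont : ∀ x > (0:ℝ), ContinuousAt ρ x := fun x hx => (hρdiff x hx).continuousAt
  have hdcont : ContinuousOn (fun x => ψ x - ρ x) (Set.Ioi 0) :=
    hψcont.sub (fun x hx => (hρcont x hx).continuousWithinAt)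
  -- key sign facts
  have hsign_lt : ∀ s ∈ Set.Icc (t 1) (t 0), s < τstar → ρ s < ψ s := by
    intro s hs h
    by_contra hc
    push_neg at hc
    rcases lt_or_eq_of_le hc with h' | h'
    · -- ψ s < ρ s : IVT on [t 1, s]
      have hsub : Set.Icc (t 1) s ⊆ Set.Ioi (0:ℝ) :=
        fun x hx => Set.mem_Ioi.2 (lt_of_lt_of_le ht1pos hx.1)
      have hcont := hdcont.mono hsub
      have hmem0 : (0:ℝ) ∈ Set.Icc (ψ s - ρ s) (ψ (t 1) - ρ (t 1)) := by
        constructor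
        · linarith
        · rw [hψt1]
          have := hρlt (t 1) ht1pos
          linarith
      have := intermediate_value_Icc' hs.1 hcont hmem0
      obtain ⟨z, hz, hz0⟩ := this
      have hzpos : 0 < z := lt_of_lt_of_le ht1pos hz.1
      have hzψ : ψ z = ρ z := by
        have : ψ z - ρ z = 0 := hz0
        linarith
      have := hτstar_uniq z hzpos hzψ
      rw [this] at hz
      exact absurd hz.2 (not_le.2 h)
    · have := hτstar_uniq s (hspos s hs) h'
      rw [this] at h; exact lt_irrefl _ h
  have hsign_gt : ∀ s ∈ Set.Icc (t 1) (t 0), τstar < s → ψ s < ρ s := by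
    intro s hs h
    by_contra hc
    push_neg at hc
    rcases lt_or_eq_of_le hc with h' | h'
    · -- ρ s < ψ s : IVT on [s, t 0]
      have hsub : Set.Icc s (t 0) ⊆ Set.Ioi (0:ℝ) :=
        fun x hx => Set.mem_Ioi.2 (lt_of_lt_of_le (hspos s hs) hx.1)
      have hcont := hdcont.mono hsub
      have hmem0 : (0:ℝ) ∈ Set.Icc (ψ (t 0) - ρ (t 0)) (ψ s - ρ s) := by
        constructor
        · rw [hψt0]
          have := hρpos (t 0) ⟨le_of_lt (lt_of_lt_of_le ht1τ hτt0.le), le_refl _⟩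
          linarith
        · linarith
      have := intermediate_value_Icc' hs.2 hcont hmem0
      obtain ⟨z, hz, hz0⟩ := this
      have hzpos : 0 < z := lt_of_lt_of_le (hspos s hs) hz.1
      have hzψ : ψ z = ρ z := by
        have : ψ z - ρ z = 0 := hz0
        linarith
      have := hτstar_uniq z hzpos hzψ
      rw [this] at hz
      exact absurd hz.1 (not_le.2 h)
    · have := hτstar_uniq s (hspos s hs) h'.symm
      rw [this] at h; exact lt_irrefl _ h
  have hstep_lt : ∀ s ∈ Set.Icc (t 1) (t 0), s < τstar → s < f s ∧ f s < τstar := by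
    intro s hs h
    constructor
    · apply hlt s (f s) (hspos s hs) (hfpos s hs)
      rw [hψf s hs]; exact hsign_lt s hs h
    · apply hlt (f s) τstar (hfpos s hs) hτstar_pos
      rw [hψf s hs, hτstar_sol]
      exact hρanti hs hτmem h
  have hstep_gt : ∀ s ∈ Set.Icc (t 1) (t 0), τstar < s → f s < s ∧ τstar < f s := by
    intro s hs h
    constructor
    · apply hlt (f s) s (hfpos s hs) (hspos s hs)
      rw [hψf s hs]; exact hsign_gt s hs h
    · apply hlt τstar (f s) hτstar_pos (hfpos s hs)
      rw [hψf s hs, hτstar_sol]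
      exact hρanti hτmem hs h
  have hfixτ : f τstar = τstar := by
    rw [hfeq τstar hτmem]; exact hτstar_eq.symm
  have hfix : ∀ s ∈ Set.Icc (t 1) (t 0), (f s = s ↔ s = τstar) := by
    intro s hs
    constructor
    · intro h
      apply hτstar_uniq s (hspos s hs)
      have h2 := hψf s hs
      rw [h] at h2; exact h2
    · rintro rfl; exact hfixτ
  refine ⟨hfix, ?_⟩
  intro s₀ hs₀
  have hseq_mem : ∀ k, f^[k] s₀ ∈ Set.Icc (t 1) (t 0) := by
    intro k
    induction k with
    | zero => exact hs₀
    | succ n ih =>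
      rw [Function.iterate_succ_apply']
      exact hfmem _ ih
  rcases lt_trichotomy s₀ τstar with hcase | hcase | hcase
  · -- increasing case
    have hub : ∀ k, f^[k] s₀ ≤ τstar := by
      intro k
      induction k with
      | zero => exact hcase.le
      | succ n ih =>
        rw [Function.iterate_succ_apply']
        rcases lt_or_eq_of_le ih with h' | h'
        · exact (hstep_lt _ (hseq_mem n) h').2.le
        · rw [h', hfixτ]
    have hmono : Monotone fun k : ℕ => f^[k] s₀ := by
      apply monotone_nat_of_le_succ
      intro k
      rw [Function.iterate_succ_apply']
      rcases lt_or_eq_of_le (hub k) with h' | h'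
      · exact (hstep_lt _ (hseq_mem k) h').1.le
      · rw [h', hfixτ]
    have hbdd : BddAbove (Set.range fun k : ℕ => f^[k] s₀) := by
      refine ⟨τstar, ?_⟩
      rintro x ⟨k, rfl⟩
      exact hub k
    have hten := tendsto_atTop_ciSup hmono hbdd
    set L := ⨆ k : ℕ, f^[k] s₀ with hL
    have hLle : L ≤ τstar := ciSup_le hub
    have hLge : s₀ ≤ L := le_ciSup hbdd 0
    have hLpos : 0 < L := lt_of_lt_of_le (hspos s₀ hs₀) hLge
    have h1 : Filter.Tendsto (fun k : ℕ => ψ (f^[k+1] s₀)) Filter.atTop (nhds (ψ L)) := by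
      have hψL : ContinuousAt ψ L :=
        hψcont.continuousAt (Ioi_mem_nhds hLpos)
      exact hψL.tendsto.comp (hten.comp (Filter.tendsto_add_atTop_nat 1))
    have h2 : Filter.Tendsto (fun k : ℕ => ρ (f^[k] s₀)) Filter.atTop (nhds (ρ L)) :=
      (hρcont L hLpos).tendsto.comp hten
    have heq : (fun k : ℕ => ψ (f^[k+1] s₀)) = fun k : ℕ => ρ (f^[k] s₀) := by
      funext k
      rw [Function.iterate_succ_apply']
      exact hψf _ (hseq_mem k)
    rw [heq] at h1
    have hψL : ψ L = ρ L := tendsto_nhds_unique h1 h2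
    have hLτ : L = τstar := hτstar_uniq L hLpos hψL
    rw [hLτ] at hten
    refine ⟨hten, fun _ => hmono, fun h => absurd h (not_lt.2 hcase.le)⟩
  · -- fixed case
    have hconst : ∀ k : ℕ, f^[k] s₀ = τstar := by
      intro k
      rw [hcase, Function.iterate_fixed hfixτ]
    refine ⟨?_, fun h => absurd hcase (ne_of_lt h), fun h => absurd hcase (ne_of_gt h)⟩
    simp only [hconst]
    exact tendsto_const_nhds
  · -- decreasing case
    have hlb : ∀ k, τstar ≤ f^[k] s₀ := by
      intro k
      induction k with
      | zero => exact hcase.le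
      | succ n ih =>
        rw [Function.iterate_succ_apply']
        rcases lt_or_eq_of_le ih with h' | h'
        · exact (hstep_gt _ (hseq_mem n) h').2.le
        · rw [← h', hfixτ]
    have hanti : Antitone fun k : ℕ => f^[k] s₀ := by
      apply antitone_nat_of_succ_le
      intro k
      rw [Function.iterate_succ_apply']
      rcases lt_or_eq_of_le (hlb k) with h' | h'
      · exact (hstep_gt _ (hseq_mem k) h').1.le
      · rw [← h', hfixτ]
    have hbdd : BddBelow (Set.range fun k : ℕ => f^[k] s₀) := by
      refine ⟨τstar, ?_⟩
      rintro x ⟨k, rfl⟩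
      exact hlb k
    have hten := tendsto_atTop_ciInf hanti hbdd
    set L := ⨅ k : ℕ, f^[k] s₀ with hL
    have hLge : τstar ≤ L := le_ciInf hlb
    have hLpos : 0 < L := lt_of_lt_of_le hτstar_pos hLge
    have h1 : Filter.Tendsto (fun k : ℕ => ψ (f^[k+1] s₀)) Filter.atTop (nhds (ψ L)) := by
      have hψL : ContinuousAt ψ L :=
        hψcont.continuousAt (Ioi_mem_nhds hLpos)
      exact hψL.tendsto.comp (hten.comp (Filter.tendsto_add_atTop_nat 1))
    have h2 : Filter.Tendsto (fun k : ℕ => ρ (f^[k] s₀)) Filter.atTop (nhds (ρ L)) :=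
      (hρcont L hLpos).tendsto.comp hten
    have heq : (fun k : ℕ => ψ (f^[k+1] s₀)) = fun k : ℕ => ρ (f^[k] s₀) := by
      funext k
      rw [Function.iterate_succ_apply']
      exact hψf _ (hseq_mem k)
    rw [heq] at h1
    have hψL : ψ L = ρ L := tendsto_nhds_unique h1 h2
    have hLτ : L = τstar := hτstar_uniq L hLpos hψL
    rw [hLτ] at hten
    refine ⟨hten, fun h => absurd h (not_lt.2 hcase.le), fun _ => hanti⟩
end

section
/- Let c > 0, let ρ : (0,∞) → ℝ be differentiable with ρ(τ) ≠ −1 for all τ > 0, and set J(τ) = c·(1 − ρ(τ)). Then for every τ > 0, the derivative of C̄(s) = J(s)/(s·(1+ρ(s))) vanishes at τ if and only if J'(τ) − (1+ρ(τ))·J(τ)/(2τ) = 0. (The proof uses the identity J'(τ)·(1−ρ(τ)) = −J(τ)·ρ'(τ), which follows from J = c·(1−ρ).) -/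
/-!
Writing `C̄ = J / (τ (1 + ρ))`, the quotient rule gives the numerator
`J' τ (1 + ρ) - J (1 + ρ) - J τ ρ'`, and the relation `J' (1 - ρ) = -J ρ'` turns `-J τ ρ'` into
`J' τ (1 - ρ)`. Hence `C̄' = 2 τ ḡ / (τ (1 + ρ))²`, which vanishes exactly when `ḡ` does.
-/

theorem hasDerivAt_div_mul_one_add {J ρ : ℝ → ℝ} {J' ρ' τ : ℝ}
    (hJ : HasDerivAt J J' τ) (hρ : HasDerivAt ρ ρ' τ) (hJρ : J' * (1 - ρ τ) = -J τ * ρ')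
    (hτ : τ ≠ 0) (hρτ : 1 + ρ τ ≠ 0) :
    HasDerivAt (fun s => J s / (s * (1 + ρ s)))
      ((2 * τ * J' - (1 + ρ τ) * J τ) / (τ * (1 + ρ τ)) ^ 2) τ := by
  have hden : HasDerivAt (fun s => s * (1 + ρ s)) (1 * (1 + ρ τ) + τ * ρ') τ :=
    (hasDerivAt_id' τ).mul (hρ.const_add 1)
  refine (hJ.div hden (mul_ne_zero hτ hρτ)).congr_deriv ?_
  congr 1
  linear_combination -τ * hJρ

theorem criterion_bar_deriv_eq_zero_iff_general
    (c : ℝ) (ρ : ℝ → ℝ)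
    (hρdiff : ∀ τ > (0 : ℝ), DifferentiableAt ℝ ρ τ)
    (hρne : ∀ τ > (0 : ℝ), ρ τ ≠ -1)
    (J : ℝ → ℝ) (hJ : ∀ τ, J τ = c * (1 - ρ τ))
    (τ : ℝ) (hτ : 0 < τ) :
    deriv (fun s : ℝ => J s / (s * (1 + ρ s))) τ = 0 ↔
      deriv J τ - (1 + ρ τ) * J τ / (2 * τ) = 0 := by
  have hρ := (hρdiff τ hτ).hasDerivAt
  have hJ' : HasDerivAt J (c * -deriv ρ τ) τ := by
    rw [show J = fun s => c * (1 - ρ s) from funext hJ]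
    simpa using (hρ.const_sub 1).const_mul c
  have hJρ : c * -deriv ρ τ * (1 - ρ τ) = -J τ * deriv ρ τ := by rw [hJ]; ring
  have hρτ : 1 + ρ τ ≠ 0 := fun h => hρne τ hτ (by linarith)
  rw [(hasDerivAt_div_mul_one_add hJ' hρ hJρ hτ.ne' hρτ).deriv, hJ'.deriv,
    div_eq_zero_iff, or_iff_left (pow_ne_zero 2 (mul_ne_zero hτ.ne' hρτ))]
  constructor <;> intro h <;> field_simp at h ⊢ <;> linarith

/-- The derivative of the criterion `C̄(τ) = J(τ)/(τ·(1+ρ(τ)))` vanishes at `τ > 0`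
iff the synthetic gradient `ḡ(τ) = J'(τ) - (1+ρ(τ))·J(τ)/(2τ)` does, where
`J(τ) = c·(1-ρ(τ))` with `c > 0` and `ρ` differentiable with `ρ(τ) ≠ -1` on `(0,∞)`. -/
theorem criterion_bar_deriv_eq_zero_iff
    (c : ℝ) (hc : 0 < c) (ρ : ℝ → ℝ)
    (hρdiff : ∀ τ > (0 : ℝ), DifferentiableAt ℝ ρ τ)
    (hρne : ∀ τ > (0 : ℝ), ρ τ ≠ -1)
    (J : ℝ → ℝ) (hJ : ∀ τ, J τ = c * (1 - ρ τ))
    (τ : ℝ) (hτ : 0 < τ) :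
    deriv (fun s : ℝ => J s / (s * (1 + ρ s))) τ = 0 ↔
      deriv J τ - (1 + ρ τ) * J τ / (2 * τ) = 0 :=
  criterion_bar_deriv_eq_zero_iff_general c ρ hρdiff hρne J hJ τ hτ
end

section
/- (Proposition 2, variance reduction.) Under the stationarity, independence, L²-mixing and time-reversibility assumptions, the covariance Cov(δ(X_τ, X₀, V_τ), δ(X₀, X_τ, −V₀)) converges to 0 as τ → ∞, i.e. the two estimators are asymptotically uncorrelated; consequently, if in addition liminf_{τ→∞} Var(δ(X_τ, X₀, V_τ)) > 0, then Var(g_τ)/Var(δ(X_τ, X₀, V_τ)) → 1/2 as τ → ∞. -/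
/-!
Write `b(x, v) = ∇φ(x)ᵀ M⁻¹ v`. Since `V₀` is centred and independent of `X₀`, the observables
`b` and `φ b` have mean zero under `Π*`. The product of the two estimators is
`(φ(X_τ) - φ(X₀))² b(X_τ, V_τ) b(X₀, V₀)`, a sum of three products of an observable at time `τ`
and one at time `0`; by mixing each tends to a product of means, one of which is `E b` or
`E[φ b]`, hence to `0`. Similarly `E δ(X_τ, X₀, V_τ) = -E[b(X_τ, V_τ) φ(X₀)] → 0`.
Time-reversibility makes the two estimators identically distributed, so
`Var g_τ = (Var δ + Cov)/2`, and the ratio tends to `1/2` as soon as `Var δ` stays away from `0`.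
-/

open Matrix MeasureTheory ProbabilityTheory Filter

/-- The continuous linear map `y ↦ ∑ i, g i * y i`, i.e. the dot product with `g`;
used to say that a function has gradient `g` at a point. -/
noncomputable def dotCLM {d : ℕ} (g : Fin d → ℝ) : (Fin d → ℝ) →L[ℝ] ℝ :=
  ∑ i, g i • ContinuousLinearMap.proj i

/-- `gradEstimator φ gradφ M x y v = (φ(x) - φ(y)) · (∇φ(x)ᵀ M⁻¹ v)`, the unbiased
estimator `δ` of the derivative of the expected squared jumping distance. -/
noncomputable def gradEstimator {d : ℕ} (φ : (Fin d → ℝ) → ℝ)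
    (gradφ : (Fin d → ℝ) → (Fin d → ℝ)) (M : Matrix (Fin d) (Fin d) ℝ)
    (x y v : Fin d → ℝ) : ℝ :=
  (φ x - φ y) * (gradφ x ⬝ᵥ M⁻¹.mulVec v)

open scoped Topology

lemma Real.isBoundedUnder_ge_of_liminf_ne_zero {ι : Type*} {l : Filter ι} {g : ι → ℝ}
    (hg : liminf g l ≠ 0) : IsBoundedUnder (· ≥ ·) l g := by
  by_contra h
  exact hg (Real.liminf_of_not_isBoundedUnder h)

lemma Filter.Tendsto.div_of_liminf_pos {ι : Type*} {l : Filter ι} {f g : ι → ℝ}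
    (hf : Tendsto f l (𝓝 0)) (hg : 0 < liminf g l) :
    Tendsto (fun i => f i / g i) l (𝓝 0) := by
  have hg2 : 0 < liminf g l / 2 := half_pos hg
  have hlarge : ∀ᶠ i in l, liminf g l / 2 < g i := eventually_lt_of_lt_liminf (half_lt_self hg)
    (Real.isBoundedUnder_ge_of_liminf_ne_zero hg.ne')
  refine squeeze_zero_norm' ?_ ((hf.norm.div_const (liminf g l / 2)).trans (by simp))
  filter_upwards [hlarge] with i hi
  rw [norm_div, Real.norm_of_nonneg (hg2.trans hi).le]
  exact div_le_div_of_nonneg_left (norm_nonneg _) hg2 hi.le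

section
variable {Ω : Type*} [MeasurableSpace Ω] {μ : Measure Ω}

lemma variance_half_add_of_variance_eq [IsFiniteMeasure μ] {X Y : Ω → ℝ} (hX : MemLp X 2 μ)
    (hY : MemLp Y 2 μ) (hXY : Var[Y; μ] = Var[X; μ]) :
    Var[fun a => 1 / 2 * (X a + Y a); μ] = (Var[X; μ] + cov[X, Y; μ]) / 2 := by
  rw [variance_const_mul, variance_fun_add hX hY, hXY]
  ring

theorem tendsto_variance_half_add_div_variance [IsFiniteMeasure μ] {ι : Type*} {l : Filter ι}
    {X Y : ι → Ω → ℝ} (hX : ∀ᶠ i in l, MemLp (X i) 2 μ) (hY : ∀ᶠ i in l, MemLp (Y i) 2 μ)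
    (hXY : ∀ᶠ i in l, Var[Y i; μ] = Var[X i; μ])
    (hcov : Tendsto (fun i => cov[X i, Y i; μ]) l (𝓝 0))
    (hvar : 0 < liminf (fun i => Var[X i; μ]) l) :
    Tendsto (fun i => Var[fun a => 1 / 2 * (X i a + Y i a); μ] / Var[X i; μ]) l (𝓝 (1 / 2)) := by
  have hlim : Tendsto (fun i => 1 / 2 + cov[X i, Y i; μ] / Var[X i; μ] / 2) l (𝓝 (1 / 2)) := by
    simpa using ((hcov.div_of_liminf_pos hvar).div_const 2).const_add (1 / 2 : ℝ)
  refine hlim.congr' ?_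
  have hpos : ∀ᶠ i in l, 0 < Var[X i; μ] :=
    eventually_lt_of_lt_liminf hvar (Real.isBoundedUnder_ge_of_liminf_ne_zero hvar.ne')
  filter_upwards [hX, hY, hXY, hpos] with i hXi hYi hXYi hposi
  rw [variance_half_add_of_variance_eq hXi hYi hXYi]
  field_simp

lemma integral_clm_apply_eq_zero_of_indepFun [IsFiniteMeasure μ] {E F : Type*}
    [MeasurableSpace E] [NormedAddCommGroup F] [NormedSpace ℝ F] [CompleteSpace F]
    [MeasurableSpace F] [OpensMeasurableSpace F]
    {X : Ω → E} {V : Ω → F} (hX : AEMeasurable X μ) (hV : AEMeasurable V μ)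
    (hXV : IndepFun X V μ) (hVint : Integrable V μ) (hV0 : μ[V] = 0) (L : E → F →L[ℝ] ℝ)
    (hL : Integrable (fun p : E × F => L p.1 p.2) (μ.map fun a => (X a, V a))) :
    ∫ a, L (X a) (V a) ∂μ = 0 := by
  have hprod := (indepFun_iff_map_prod_eq_prod_map_map hX hV).mp hXV
  rw [← integral_map (hX.prodMk hV) (f := fun p : E × F => L p.1 p.2) hL.1, hprod,
    integral_prod _ (hprod ▸ hL)]
  have hinner : ∀ x, ∫ v, L x v ∂(μ.map V) = 0 := fun x => by
    rw [integral_map hV (L x).continuous.aestronglyMeasurable, (L x).integral_comp_comm hVint,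
      hV0, map_zero]
  simp [hinner]

lemma ProbabilityTheory.IdentDistrib.memLp_comp {α β : Type*} [MeasurableSpace α]
    [MeasurableSpace β] {ν : Measure α} {Y : α → β} {Z : Ω → β} (h : IdentDistrib Y Z ν μ)
    {ψ : β → ℝ} {p : ENNReal} (hψ : MemLp ψ p (μ.map Z)) : MemLp (fun a => ψ (Y a)) p ν := by
  rw [← h.map_eq] at hψ
  exact (memLp_map_measure_iff hψ.1 h.aemeasurable_fst).mp hψ

lemma ProbabilityTheory.IdentDistrib.integral_comp {α β : Type*} [MeasurableSpace α]
    [MeasurableSpace β] {ν : Measure α} {Y : α → β} {Z : Ω → β} (h : IdentDistrib Y Z ν μ)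
    {ψ : β → ℝ} (hψ : AEStronglyMeasurable ψ (μ.map Z)) :
    ∫ a, ψ (Y a) ∂ν = ∫ a, ψ (Z a) ∂μ :=
  (h.comp_of_aemeasurable (h.map_eq ▸ hψ.aemeasurable)).integral_eq

lemma ProbabilityTheory.IdentDistrib.integrable_comp_mul_comp {β : Type*} [MeasurableSpace β]
    {Y Z : Ω → β} (h : IdentDistrib Y Z μ μ) {ψ ω : β → ℝ} (hψ : MemLp ψ 2 (μ.map Z))
    (hω : MemLp ω 2 (μ.map Z)) : Integrable (fun a => ψ (Y a) * ω (Z a)) μ :=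
  (h.memLp_comp hψ).integrable_mul ((IdentDistrib.refl h.aemeasurable_snd).memLp_comp hω)

end

lemma dotCLM_apply {d : ℕ} (g v : Fin d → ℝ) : dotCLM g v = g ⬝ᵥ v := by
  simp [dotCLM, dotProduct]

lemma measurable_of_hasFDerivAt_dotCLM {d : ℕ} {φ : (Fin d → ℝ) → ℝ}
    {gradφ : (Fin d → ℝ) → (Fin d → ℝ)} (hgradφ : ∀ y, HasFDerivAt φ (dotCLM (gradφ y)) y) :
    Measurable gradφ := by
  have hgrad : gradφ = fun y i => fderiv ℝ φ y (Pi.single i 1) := by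
    funext y i
    rw [(hgradφ y).fderiv, dotCLM_apply]
    simp
  rw [hgrad]
  exact measurable_pi_lambda _ fun i => measurable_fderiv_apply_const ℝ φ _

section
variable {d : ℕ} {Ω : Type*} [MeasurableSpace Ω] {μ : Measure Ω}

lemma gradEstimator_eq_sub (φ : (Fin d → ℝ) → ℝ) (gradφ : (Fin d → ℝ) → (Fin d → ℝ))
    (M : Matrix (Fin d) (Fin d) ℝ) (x y v : Fin d → ℝ) :
    gradEstimator φ gradφ M x y v
      = φ x * (gradφ x ⬝ᵥ M⁻¹ *ᵥ v) - (gradφ x ⬝ᵥ M⁻¹ *ᵥ v) * φ y := by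
  rw [gradEstimator]
  ring

lemma gradEstimator_mul_gradEstimator_neg (φ : (Fin d → ℝ) → ℝ)
    (gradφ : (Fin d → ℝ) → (Fin d → ℝ)) (M : Matrix (Fin d) (Fin d) ℝ) (x y v w : Fin d → ℝ) :
    gradEstimator φ gradφ M x y v * gradEstimator φ gradφ M y x (-w)
      = φ x ^ 2 * (gradφ x ⬝ᵥ M⁻¹ *ᵥ v) * (gradφ y ⬝ᵥ M⁻¹ *ᵥ w)
        - 2 * (φ x * (gradφ x ⬝ᵥ M⁻¹ *ᵥ v) * (φ y * (gradφ y ⬝ᵥ M⁻¹ *ᵥ w)))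
        + (gradφ x ⬝ᵥ M⁻¹ *ᵥ v) * (φ y ^ 2 * (gradφ y ⬝ᵥ M⁻¹ *ᵥ w)) := by
  simp only [gradEstimator, mulVec_neg, dotProduct_neg]
  ring

lemma integral_mul_dotProduct_mulVec_eq_zero [IsFiniteMeasure μ] {E : Type*}
    [MeasurableSpace E] {X : Ω → E} {V : Ω → Fin d → ℝ} (hX : AEMeasurable X μ)
    (hV : AEMeasurable V μ) (hXV : IndepFun X V μ) (hVint : Integrable V μ) (hV0 : μ[V] = 0)
    (h : E → ℝ) (w : E → Fin d → ℝ) (A : Matrix (Fin d) (Fin d) ℝ)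
    (hint : Integrable (fun p : E × (Fin d → ℝ) => h p.1 * (w p.1 ⬝ᵥ A *ᵥ p.2))
      (μ.map fun a => (X a, V a))) :
    ∫ a, h (X a) * (w (X a) ⬝ᵥ A *ᵥ V a) ∂μ = 0 := by
  have hL : ∀ x v, h x * (w x ⬝ᵥ A *ᵥ v) = (h x • dotCLM (w x ᵥ* A)) v := fun x v => by
    simp [dotCLM_apply, dotProduct_mulVec]
  simp only [hL] at hint ⊢
  exact integral_clm_apply_eq_zero_of_indepFun hX hV hXV hVint hV0
    (fun x => h x • dotCLM (w x ᵥ* A)) hint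

lemma identDistrib_gradEstimator_swap {φ : (Fin d → ℝ) → ℝ}
    {gradφ : (Fin d → ℝ) → (Fin d → ℝ)} (hφ : Measurable φ) (hgradφ : Measurable gradφ)
    (M : Matrix (Fin d) (Fin d) ℝ) {X₀ Xτ V₀ Vτ : Ω → Fin d → ℝ}
    (hrev : IdentDistrib (fun a => (Xτ a, Vτ a, X₀ a, V₀ a))
      (fun a => (X₀ a, -V₀ a, Xτ a, -Vτ a)) μ μ) :
    IdentDistrib (fun a => gradEstimator φ gradφ M (X₀ a) (Xτ a) (-V₀ a))
      (fun a => gradEstimator φ gradφ M (Xτ a) (X₀ a) (Vτ a)) μ μ := by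
  have hF : Measurable fun q : (Fin d → ℝ) × (Fin d → ℝ) × (Fin d → ℝ) × (Fin d → ℝ) =>
      gradEstimator φ gradφ M q.2.2.1 q.1 (-q.2.2.2) := by
    unfold gradEstimator
    fun_prop
  simpa [Function.comp_def] using hrev.comp hF

lemma tendsto_integral_gradEstimator [IsProbabilityMeasure μ] {φ : (Fin d → ℝ) → ℝ}
    {gradφ : (Fin d → ℝ) → (Fin d → ℝ)} (M : Matrix (Fin d) (Fin d) ℝ)
    {X V : ℝ → Ω → Fin d → ℝ}
    (hstat : ∀ τ ≥ (0 : ℝ),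
      IdentDistrib (fun a => (X τ a, V τ a)) (fun a => (X 0 a, V 0 a)) μ μ)
    (hmix : ∀ ψ ω : (Fin d → ℝ) × (Fin d → ℝ) → ℝ,
      MemLp ψ 2 (μ.map fun a => (X 0 a, V 0 a)) → MemLp ω 2 (μ.map fun a => (X 0 a, V 0 a)) →
      Tendsto (fun τ => ∫ a, ψ (X τ a, V τ a) * ω (X 0 a, V 0 a) ∂μ) atTop
        (𝓝 ((∫ a, ψ (X 0 a, V 0 a) ∂μ) * ∫ a, ω (X 0 a, V 0 a) ∂μ)))
    (hφ : MemLp (fun p : (Fin d → ℝ) × (Fin d → ℝ) => φ p.1) 2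
      (μ.map fun a => (X 0 a, V 0 a)))
    (hb : MemLp (fun p : (Fin d → ℝ) × (Fin d → ℝ) => gradφ p.1 ⬝ᵥ M⁻¹ *ᵥ p.2) 2
      (μ.map fun a => (X 0 a, V 0 a)))
    (hφb : MemLp (fun p : (Fin d → ℝ) × (Fin d → ℝ) => φ p.1 * (gradφ p.1 ⬝ᵥ M⁻¹ *ᵥ p.2)) 2
      (μ.map fun a => (X 0 a, V 0 a)))
    (hb0 : ∫ a, gradφ (X 0 a) ⬝ᵥ M⁻¹ *ᵥ V 0 a ∂μ = 0)
    (hφb0 : ∫ a, φ (X 0 a) * (gradφ (X 0 a) ⬝ᵥ M⁻¹ *ᵥ V 0 a) ∂μ = 0) :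
    Tendsto (fun τ => ∫ a, gradEstimator φ gradφ M (X τ a) (X 0 a) (V τ a) ∂μ) atTop (𝓝 0) := by
  have hlim : Tendsto (fun τ => -∫ a, (gradφ (X τ a) ⬝ᵥ M⁻¹ *ᵥ V τ a) * φ (X 0 a) ∂μ) atTop
      (𝓝 0) := by
    simpa [hb0] using (hmix _ _ hb hφ).neg
  refine hlim.congr' ?_
  filter_upwards [eventually_ge_atTop 0] with τ hτ
  have hφbτ : ∫ a, φ (X τ a) * (gradφ (X τ a) ⬝ᵥ M⁻¹ *ᵥ V τ a) ∂μ = 0 :=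
    ((hstat τ hτ).integral_comp hφb.1).trans hφb0
  simp_rw [gradEstimator_eq_sub]
  rw [integral_sub (((hstat τ hτ).memLp_comp hφb).integrable one_le_two)
    ((hstat τ hτ).integrable_comp_mul_comp hb hφ), hφbτ, zero_sub]

lemma tendsto_integral_gradEstimator_mul_swap [IsProbabilityMeasure μ] {φ : (Fin d → ℝ) → ℝ}
    {gradφ : (Fin d → ℝ) → (Fin d → ℝ)} (M : Matrix (Fin d) (Fin d) ℝ)
    {X V : ℝ → Ω → Fin d → ℝ}
    (hstat : ∀ τ ≥ (0 : ℝ),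
      IdentDistrib (fun a => (X τ a, V τ a)) (fun a => (X 0 a, V 0 a)) μ μ)
    (hmix : ∀ ψ ω : (Fin d → ℝ) × (Fin d → ℝ) → ℝ,
      MemLp ψ 2 (μ.map fun a => (X 0 a, V 0 a)) → MemLp ω 2 (μ.map fun a => (X 0 a, V 0 a)) →
      Tendsto (fun τ => ∫ a, ψ (X τ a, V τ a) * ω (X 0 a, V 0 a) ∂μ) atTop
        (𝓝 ((∫ a, ψ (X 0 a, V 0 a) ∂μ) * ∫ a, ω (X 0 a, V 0 a) ∂μ)))
    (hb : MemLp (fun p : (Fin d → ℝ) × (Fin d → ℝ) => gradφ p.1 ⬝ᵥ M⁻¹ *ᵥ p.2) 2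
      (μ.map fun a => (X 0 a, V 0 a)))
    (hφb : MemLp (fun p : (Fin d → ℝ) × (Fin d → ℝ) => φ p.1 * (gradφ p.1 ⬝ᵥ M⁻¹ *ᵥ p.2)) 2
      (μ.map fun a => (X 0 a, V 0 a)))
    (hφ2b : MemLp (fun p : (Fin d → ℝ) × (Fin d → ℝ) =>
      φ p.1 ^ 2 * (gradφ p.1 ⬝ᵥ M⁻¹ *ᵥ p.2)) 2 (μ.map fun a => (X 0 a, V 0 a)))
    (hb0 : ∫ a, gradφ (X 0 a) ⬝ᵥ M⁻¹ *ᵥ V 0 a ∂μ = 0)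
    (hφb0 : ∫ a, φ (X 0 a) * (gradφ (X 0 a) ⬝ᵥ M⁻¹ *ᵥ V 0 a) ∂μ = 0) :
    Tendsto (fun τ => ∫ a, gradEstimator φ gradφ M (X τ a) (X 0 a) (V τ a) *
      gradEstimator φ gradφ M (X 0 a) (X τ a) (-V 0 a) ∂μ) atTop (𝓝 0) := by
  have hlim : Tendsto (fun τ =>
      (∫ a, φ (X τ a) ^ 2 * (gradφ (X τ a) ⬝ᵥ M⁻¹ *ᵥ V τ a) * (gradφ (X 0 a) ⬝ᵥ M⁻¹ *ᵥ V 0 a) ∂μ)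
      - 2 * (∫ a, φ (X τ a) * (gradφ (X τ a) ⬝ᵥ M⁻¹ *ᵥ V τ a) *
          (φ (X 0 a) * (gradφ (X 0 a) ⬝ᵥ M⁻¹ *ᵥ V 0 a)) ∂μ)
      + ∫ a, (gradφ (X τ a) ⬝ᵥ M⁻¹ *ᵥ V τ a) *
          (φ (X 0 a) ^ 2 * (gradφ (X 0 a) ⬝ᵥ M⁻¹ *ᵥ V 0 a)) ∂μ) atTop (𝓝 0) := by
    simpa [hb0, hφb0] using
      ((hmix _ _ hφ2b hb).sub ((hmix _ _ hφb hφb).const_mul 2)).add (hmix _ _ hb hφ2b)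
  refine hlim.congr' ?_
  filter_upwards [eventually_ge_atTop 0] with τ hτ
  have hφ2b_b := (hstat τ hτ).integrable_comp_mul_comp hφ2b hb
  have hφb_φb := ((hstat τ hτ).integrable_comp_mul_comp hφb hφb).const_mul 2
  have hb_φ2b := (hstat τ hτ).integrable_comp_mul_comp hb hφ2b
  simp_rw [gradEstimator_mul_gradEstimator_neg]
  rw [integral_add (by exact hφ2b_b.sub hφb_φb) hb_φ2b, integral_sub hφ2b_b hφb_φb,
    integral_const_mul]

end

theorem variance_reduction_general {d : ℕ}
    (M : Matrix (Fin d) (Fin d) ℝ) (φ : (Fin d → ℝ) → ℝ) (gradφ : (Fin d → ℝ) → (Fin d → ℝ))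
    (hgradφ : ∀ y, HasFDerivAt φ (dotCLM (gradφ y)) y)
    {Ω : Type*} [MeasurableSpace Ω] (μ : Measure Ω) [IsProbabilityMeasure μ]
    (X V : ℝ → Ω → Fin d → ℝ)
    (hXmeas : ∀ τ, Measurable (X τ)) (hVmeas : ∀ τ, Measurable (V τ))
    -- stationarity: the law of (X_τ, V_τ) equals the law Π* of (X₀, V₀)
    (hstat : ∀ τ ≥ (0 : ℝ),
      Measure.map (fun a => (X τ a, V τ a)) μ = Measure.map (fun a => (X 0 a, V 0 a)) μ)
    -- independence: V₀ is integrable, centered, and independent of X₀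
    (hVint : Integrable (V 0) μ) (hVcentered : ∫ a, V 0 a ∂μ = 0)
    (hindep : IndepFun (X 0) (V 0) μ)
    -- L²-mixing
    (hmix : ∀ ψ ω : (Fin d → ℝ) × (Fin d → ℝ) → ℝ,
      MemLp ψ 2 (Measure.map (fun a => (X 0 a, V 0 a)) μ) →
      MemLp ω 2 (Measure.map (fun a => (X 0 a, V 0 a)) μ) →
      Tendsto (fun τ => ∫ a, ψ (X τ a, V τ a) * ω (X 0 a, V 0 a) ∂μ) atTop
        (nhds ((∫ a, ψ (X 0 a, V 0 a) ∂μ) * ∫ a, ω (X 0 a, V 0 a) ∂μ)))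
    -- square-integrability of the relevant observables under Π*
    (hL2a : MemLp (fun p : (Fin d → ℝ) × (Fin d → ℝ) => φ p.1) 2
      (Measure.map (fun a => (X 0 a, V 0 a)) μ))
    (hL2b : MemLp (fun p : (Fin d → ℝ) × (Fin d → ℝ) => gradφ p.1 ⬝ᵥ M⁻¹.mulVec p.2) 2
      (Measure.map (fun a => (X 0 a, V 0 a)) μ))
    (hL2c : MemLp (fun p : (Fin d → ℝ) × (Fin d → ℝ) =>
        φ p.1 * (gradφ p.1 ⬝ᵥ M⁻¹.mulVec p.2)) 2
      (Measure.map (fun a => (X 0 a, V 0 a)) μ))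
    (hL2e : MemLp (fun p : (Fin d → ℝ) × (Fin d → ℝ) =>
        φ p.1 ^ 2 * (gradφ p.1 ⬝ᵥ M⁻¹.mulVec p.2)) 2
      (Measure.map (fun a => (X 0 a, V 0 a)) μ))
    -- time-reversibility: (X_τ, V_τ, X₀, V₀) and (X₀, -V₀, X_τ, -V_τ) have the same law
    (hrev : ∀ τ ≥ (0 : ℝ),
      Measure.map (fun a => (X τ a, V τ a, X 0 a, V 0 a)) μ =
      Measure.map (fun a => (X 0 a, -V 0 a, X τ a, -V τ a)) μ)
    -- square-integrability of δ(X_τ, X₀, V_τ), δ(X₀, X_τ, -V₀) and g_τ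
    (hδL2 : ∀ τ : ℝ,
      MemLp (fun a => gradEstimator φ gradφ M (X τ a) (X 0 a) (V τ a)) 2 μ)
    (hδrevL2 : ∀ τ : ℝ,
      MemLp (fun a => gradEstimator φ gradφ M (X 0 a) (X τ a) (-V 0 a)) 2 μ) :
    Tendsto (fun τ =>
        (∫ a, gradEstimator φ gradφ M (X τ a) (X 0 a) (V τ a) *
          gradEstimator φ gradφ M (X 0 a) (X τ a) (-V 0 a) ∂μ) -
        (∫ a, gradEstimator φ gradφ M (X τ a) (X 0 a) (V τ a) ∂μ) *
          ∫ a, gradEstimator φ gradφ M (X 0 a) (X τ a) (-V 0 a) ∂μ)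
      atTop (nhds 0) ∧
    (0 < Filter.liminf
        (fun τ => variance (fun a => gradEstimator φ gradφ M (X τ a) (X 0 a) (V τ a)) μ)
        atTop →
      Tendsto (fun τ =>
          variance (fun a => (1 / 2) * (gradEstimator φ gradφ M (X τ a) (X 0 a) (V τ a) +
            gradEstimator φ gradφ M (X 0 a) (X τ a) (-V 0 a))) μ /
          variance (fun a => gradEstimator φ gradφ M (X τ a) (X 0 a) (V τ a)) μ)
        atTop (nhds (1 / 2))) := by
  have hφm : Measurable φ :=
    (Differentiable.continuous fun y => (hgradφ y).differentiableAt).measurable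
  have hgradφm : Measurable gradφ := measurable_of_hasFDerivAt_dotCLM hgradφ
  have hstationary : ∀ τ ≥ (0 : ℝ),
      IdentDistrib (fun a => (X τ a, V τ a)) (fun a => (X 0 a, V 0 a)) μ μ := fun τ hτ =>
    ⟨((hXmeas τ).prodMk (hVmeas τ)).aemeasurable,
      ((hXmeas 0).prodMk (hVmeas 0)).aemeasurable, hstat τ hτ⟩
  have hmean0 := integral_mul_dotProduct_mulVec_eq_zero (hXmeas 0).aemeasurable
    (hVmeas 0).aemeasurable hindep hVint hVcentered (w := gradφ) (A := M⁻¹)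
  have hb0 : ∫ a, gradφ (X 0 a) ⬝ᵥ M⁻¹ *ᵥ V 0 a ∂μ = 0 := by
    simpa using hmean0 (fun _ => 1) (by simpa using hL2b.integrable one_le_two)
  have hφb0 := hmean0 φ (hL2c.integrable one_le_two)
  have hmean := tendsto_integral_gradEstimator M hstationary hmix hL2a hL2b hL2c hb0 hφb0
  have hprod := tendsto_integral_gradEstimator_mul_swap M hstationary hmix hL2b hL2c hL2e hb0 hφb0
  have hswap : ∀ᶠ τ in atTop,
      IdentDistrib (fun a => gradEstimator φ gradφ M (X 0 a) (X τ a) (-V 0 a))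
        (fun a => gradEstimator φ gradφ M (X τ a) (X 0 a) (V τ a)) μ μ := by
    filter_upwards [eventually_ge_atTop 0] with τ hτ
    refine identDistrib_gradEstimator_swap hφm hgradφm M ⟨?_, ?_, hrev τ hτ⟩ <;> fun_prop
  have hcov : Tendsto (fun τ => cov[fun a => gradEstimator φ gradφ M (X τ a) (X 0 a) (V τ a),
      fun a => gradEstimator φ gradφ M (X 0 a) (X τ a) (-V 0 a); μ]) atTop (𝓝 0) := by
    have hmean' := hmean.congr' (hswap.mono fun τ h => h.integral_eq.symm)
    simpa [covariance_eq_sub (hδL2 _) (hδrevL2 _)] using hprod.sub (hmean.mul hmean')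
  refine ⟨?_, tendsto_variance_half_add_div_variance (.of_forall hδL2) (.of_forall hδrevL2)
    (hswap.mono fun τ h => h.variance_eq) hcov⟩
  simpa [covariance_eq_sub (hδL2 _) (hδrevL2 _)] using hcov

/-- Proposition 2 (variance reduction): under stationarity, independence, L²-mixing and
time-reversibility, `Cov(δ(X_τ, X₀, V_τ), δ(X₀, X_τ, -V₀)) → 0` as `τ → ∞` (the two
estimators are asymptotically uncorrelated); consequently, if moreover
`liminf Var(δ(X_τ, X₀, V_τ)) > 0` as `τ → ∞`, then `Var(g_τ)/Var(δ(X_τ, X₀, V_τ)) → 1/2`,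
where `g_τ = (δ(X_τ, X₀, V_τ) + δ(X₀, X_τ, -V₀))/2`. -/
theorem variance_reduction {d : ℕ}
    (M : Matrix (Fin d) (Fin d) ℝ) (hMsymm : M.IsSymm) (hMpd : M.PosDef)
    (φ : (Fin d → ℝ) → ℝ) (gradφ : (Fin d → ℝ) → (Fin d → ℝ))
    (hφ : ContDiff ℝ 1 φ) (hgradφ : ∀ y, HasFDerivAt φ (dotCLM (gradφ y)) y)
    {Ω : Type*} [MeasurableSpace Ω] (μ : Measure Ω) [IsProbabilityMeasure μ]
    (X V : ℝ → Ω → Fin d → ℝ)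
    (hXmeas : ∀ τ, Measurable (X τ)) (hVmeas : ∀ τ, Measurable (V τ))
    -- stationarity: the law of (X_τ, V_τ) equals the law Π* of (X₀, V₀)
    (hstat : ∀ τ ≥ (0 : ℝ),
      Measure.map (fun a => (X τ a, V τ a)) μ = Measure.map (fun a => (X 0 a, V 0 a)) μ)
    -- independence: V₀ is integrable, centered, and independent of X₀
    (hVint : Integrable (V 0) μ) (hVcentered : ∫ a, V 0 a ∂μ = 0)
    (hindep : IndepFun (X 0) (V 0) μ)
    -- L²-mixing
    (hmix : ∀ ψ ω : (Fin d → ℝ) × (Fin d → ℝ) → ℝ,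
      MemLp ψ 2 (Measure.map (fun a => (X 0 a, V 0 a)) μ) →
      MemLp ω 2 (Measure.map (fun a => (X 0 a, V 0 a)) μ) →
      Tendsto (fun τ => ∫ a, ψ (X τ a, V τ a) * ω (X 0 a, V 0 a) ∂μ) atTop
        (nhds ((∫ a, ψ (X 0 a, V 0 a) ∂μ) * ∫ a, ω (X 0 a, V 0 a) ∂μ)))
    -- square-integrability of the relevant observables under Π*
    (hL2a : MemLp (fun p : (Fin d → ℝ) × (Fin d → ℝ) => φ p.1) 2
      (Measure.map (fun a => (X 0 a, V 0 a)) μ))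
    (hL2b : MemLp (fun p : (Fin d → ℝ) × (Fin d → ℝ) => gradφ p.1 ⬝ᵥ M⁻¹.mulVec p.2) 2
      (Measure.map (fun a => (X 0 a, V 0 a)) μ))
    (hL2c : MemLp (fun p : (Fin d → ℝ) × (Fin d → ℝ) =>
        φ p.1 * (gradφ p.1 ⬝ᵥ M⁻¹.mulVec p.2)) 2
      (Measure.map (fun a => (X 0 a, V 0 a)) μ))
    (hL2d : MemLp (fun p : (Fin d → ℝ) × (Fin d → ℝ) => φ p.1 ^ 2) 2
      (Measure.map (fun a => (X 0 a, V 0 a)) μ))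
    (hL2e : MemLp (fun p : (Fin d → ℝ) × (Fin d → ℝ) =>
        φ p.1 ^ 2 * (gradφ p.1 ⬝ᵥ M⁻¹.mulVec p.2)) 2
      (Measure.map (fun a => (X 0 a, V 0 a)) μ))
    -- time-reversibility: (X_τ, V_τ, X₀, V₀) and (X₀, -V₀, X_τ, -V_τ) have the same law
    (hrev : ∀ τ ≥ (0 : ℝ),
      Measure.map (fun a => (X τ a, V τ a, X 0 a, V 0 a)) μ =
      Measure.map (fun a => (X 0 a, -V 0 a, X τ a, -V τ a)) μ)
    -- square-integrability of δ(X_τ, X₀, V_τ), δ(X₀, X_τ, -V₀) and g_τ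
    (hδL2 : ∀ τ : ℝ,
      MemLp (fun a => gradEstimator φ gradφ M (X τ a) (X 0 a) (V τ a)) 2 μ)
    (hδrevL2 : ∀ τ : ℝ,
      MemLp (fun a => gradEstimator φ gradφ M (X 0 a) (X τ a) (-V 0 a)) 2 μ)
    (hgL2 : ∀ τ : ℝ,
      MemLp (fun a => (1 / 2) * (gradEstimator φ gradφ M (X τ a) (X 0 a) (V τ a) +
        gradEstimator φ gradφ M (X 0 a) (X τ a) (-V 0 a))) 2 μ) :
    Tendsto (fun τ =>
        (∫ a, gradEstimator φ gradφ M (X τ a) (X 0 a) (V τ a) *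
          gradEstimator φ gradφ M (X 0 a) (X τ a) (-V 0 a) ∂μ) -
        (∫ a, gradEstimator φ gradφ M (X τ a) (X 0 a) (V τ a) ∂μ) *
          ∫ a, gradEstimator φ gradφ M (X 0 a) (X τ a) (-V 0 a) ∂μ)
      atTop (nhds 0) ∧
    (0 < Filter.liminf
        (fun τ => variance (fun a => gradEstimator φ gradφ M (X τ a) (X 0 a) (V τ a)) μ)
        atTop →
      Tendsto (fun τ =>
          variance (fun a => (1 / 2) * (gradEstimator φ gradφ M (X τ a) (X 0 a) (V τ a) +
            gradEstimator φ gradφ M (X 0 a) (X τ a) (-V 0 a))) μ /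
          variance (fun a => gradEstimator φ gradφ M (X τ a) (X 0 a) (V τ a)) μ)
        atTop (nhds (1 / 2))) :=
  variance_reduction_general M φ gradφ hgradφ μ X V hXmeas hVmeas hstat hVint hVcentered hindep hmix
    hL2a hL2b hL2c hL2e hrev hδL2 hδrevL2
end
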